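/- For a finite-dimensional Kac algebra H, the Fourier transforms satisfy F_{H*} ∘ F_H = S, where S is the antipode of H. -/

import Mathlib

/- STATEMENT 4: For a finite-dimensional Kac algebra H, the Fourier transforms satisfy
F_{H*} ∘ F_H = S, where S is the antipode of H.  Here h ∈ H and φ ∈ H* are the unique non-zero
idempotent integrals, normalized so that φ(h) = 1/dim H, δ = √(dim H),
F_H(a) = δ φ₁(a) φ₂ and F_{H*}(f) = δ f(h₁) h₂. -/

open scoped TensorProduct

noncomputable section

variable {H : Type*} [Ring H] [HopfAlgebra ℂ H]

/-- Convolution product on the dual of `H`, as a linear map on the tensor square. -/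
def dmulT : Module.Dual ℂ H ⊗[ℂ] Module.Dual ℂ H →ₗ[ℂ] Module.Dual ℂ H :=
  (Coalgebra.comul (R := ℂ) (A := H)).dualMap ∘ₗ TensorProduct.dualDistrib ℂ H H

/-- Comultiplication on the dual of `H` (dual to the multiplication of `H`). -/
def dComul [FiniteDimensional ℂ H] :
    Module.Dual ℂ H →ₗ[ℂ] Module.Dual ℂ H ⊗[ℂ] Module.Dual ℂ H :=
  (TensorProduct.dualDistribEquiv ℂ H H).symm.toLinearMap ∘ₗ (LinearMap.mul' ℂ H).dualMap

/-- The Fourier transform `F_H : H → H*`, `a ↦ δ φ₁(a) φ₂`, where `δ = √(dim H)` and `φ` is the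
idempotent integral of `H*`. -/
def FH [FiniteDimensional ℂ H] (φ : Module.Dual ℂ H) : H →ₗ[ℂ] Module.Dual ℂ H :=
  (Real.sqrt (Module.finrank ℂ H) : ℂ) •
    ((TensorProduct.lid ℂ (Module.Dual ℂ H)).toLinearMap
      ∘ₗ TensorProduct.map (contractRight ℂ H) LinearMap.id
      ∘ₗ (TensorProduct.assoc ℂ H (Module.Dual ℂ H) (Module.Dual ℂ H)).symm.toLinearMap
      ∘ₗ (TensorProduct.mk ℂ H (Module.Dual ℂ H ⊗[ℂ] Module.Dual ℂ H)).flip (dComul φ))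

/-- The Fourier transform `F_{H*} : H* → H`, `f ↦ δ f(h₁) h₂`, where `δ = √(dim H)` and `h` is
the idempotent integral of `H`. -/
def FK (h : H) : Module.Dual ℂ H →ₗ[ℂ] H :=
  (Real.sqrt (Module.finrank ℂ H) : ℂ) •
    ((TensorProduct.lid ℂ H).toLinearMap
      ∘ₗ TensorProduct.map (contractLeft ℂ H) LinearMap.id
      ∘ₗ (TensorProduct.assoc ℂ (Module.Dual ℂ H) H H).symm.toLinearMap
      ∘ₗ (TensorProduct.mk ℂ (Module.Dual ℂ H) (H ⊗[ℂ] H)).flip (Coalgebra.comul (R := ℂ) h))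

/-! Unwinding the definitions, `F_{H*}(F_H(a)) = (dim H) φ(a h₁) h₂`. Because `h` is a left
integral, `(a ⊗ 1) Δ(h) = (1 ⊗ S(a)) Δ(h)` (this is where `S² = id` enters), and because `φ` is a
left integral of `H*`, `φ(h₁) h₂ = φ(h) 1`. Together they give `φ(a h₁) h₂ = φ(h) S(a)`, and the
normalization `φ(h) = 1 / dim H` finishes the computation. -/

open Coalgebra HopfAlgebra TensorProduct

namespace HopfAlgebra

variable {R A : Type*} [CommSemiring R] [Semiring A] [HopfAlgebra R A]

-- In Sweedler notation: `∑ S(x₁) x₂ ⊗ x₃ = 1 ⊗ x`.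
theorem rTensor_mul_antipode_rTensor_comul_comul (x : A) :
    ((LinearMap.mul' R A ∘ₗ (antipode R).rTensor A).rTensor A) (comul.rTensor A (comul x)) =
      1 ⊗ₜ x := by
  rw [← LinearMap.rTensor_comp_apply, LinearMap.comp_assoc,
    mul_antipode_rTensor_comul, LinearMap.rTensor_comp_apply, rTensor_counit_comul]
  simp

theorem antipode_tmul_one_mul (y : A) (w : A ⊗[R] A) :
    (antipode R y ⊗ₜ[R] (1 : A)) * w =
      ((LinearMap.mul' R A ∘ₗ (antipode R).rTensor A).rTensor A)
        ((TensorProduct.assoc R A A A).symm (y ⊗ₜ w)) := by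
  induction w using TensorProduct.induction_on with
  | zero => simp
  | tmul u v => simp
  | add v w hv hw => rw [mul_add, hv, hw, tmul_add, map_add, map_add]

theorem comul_mul_comul_of_mul_eq_counit_smul {h : A}
    (hh : ∀ x : A, x * h = counit (R := R) x • h) (y : A) :
    comul (R := R) y * comul h = counit (R := R) y • comul (R := R) h := by
  rw [← Bialgebra.comul_mul, hh, map_smul]

theorem one_tmul_mul_comul_of_mul_eq_counit_smul {h : A}
    (hh : ∀ x : A, x * h = counit (R := R) x • h) (x : A) :
    ((1 : A) ⊗ₜ[R] x) * comul h = (antipode R x ⊗ₜ[R] (1 : A)) * comul h := by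
  -- Evaluate `y ⊗ z ↦ (S y ⊗ 1) Δ(z) Δ(h)` at `Δ x` in two ways: through coassociativity and
  -- through `Δ(z) Δ(h) = ε(z) Δ(h)`.
  have htwoWays : LinearMap.mulRight R (comul h) ∘ₗ
        (LinearMap.mul' R A ∘ₗ (antipode R).rTensor A).rTensor A ∘ₗ
        (TensorProduct.assoc R A A A).symm.toLinearMap ∘ₗ comul.lTensor A =
      LinearMap.mulRight R (comul h) ∘ₗ (Algebra.TensorProduct.includeLeft (S := R)).toLinearMap ∘ₗ
        antipode R ∘ₗ (TensorProduct.rid R A).toLinearMap ∘ₗ counit.lTensor A := by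
    refine TensorProduct.ext' fun y z => ?_
    simp [← antipode_tmul_one_mul, mul_assoc, comul_mul_comul_of_mul_eq_counit_smul hh]
  simpa [rTensor_mul_antipode_rTensor_comul_comul] using LinearMap.congr_fun htwoWays (comul x)

end HopfAlgebra

theorem lid_rTensor_one_tmul_mul {R A : Type*} [CommSemiring R] [Semiring A] [Algebra R A]
    (φ : Module.Dual R A) (y : A) (w : A ⊗[R] A) :
    TensorProduct.lid R A (φ.rTensor A (((1 : A) ⊗ₜ[R] y) * w)) =
      y * TensorProduct.lid R A (φ.rTensor A w) := by
  induction w using TensorProduct.induction_on with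
  | zero => simp
  | tmul u v => simp
  | add v w hv hw => rw [mul_add, map_add, map_add, hv, hw, map_add, map_add, mul_add]

theorem lid_rTensor_comul_of_dmulT_eq (φ : Module.Dual ℂ H)
    (hφ : ∀ f : Module.Dual ℂ H, dmulT (φ ⊗ₜ f) = f 1 • φ) (x : H) :
    TensorProduct.lid ℂ H (φ.rTensor H (comul x)) = φ x • 1 := by
  refine (Module.eval_apply_injective ℂ) (LinearMap.ext fun f => ?_)
  have hf : f ∘ₗ (TensorProduct.lid ℂ H).toLinearMap ∘ₗ φ.rTensor H = dualDistrib ℂ H H (φ ⊗ₜ f) :=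
    TensorProduct.ext' fun u v => by simp
  simpa [dmulT, ← hf, mul_comm] using LinearMap.congr_fun (hφ f) x

theorem dualDistrib_dComul [FiniteDimensional ℂ H] (φ : Module.Dual ℂ H) :
    dualDistrib ℂ H H (dComul φ) = φ ∘ₗ LinearMap.mul' ℂ H :=
  (dualDistribEquiv ℂ H H).apply_symm_apply _

theorem FH_apply [FiniteDimensional ℂ H] (φ : Module.Dual ℂ H) (a : H) :
    FH φ a = (Real.sqrt (Module.finrank ℂ H) : ℂ) • (φ ∘ₗ LinearMap.mulLeft ℂ a) := by
  have hcontract : ∀ t : Module.Dual ℂ H ⊗[ℂ] Module.Dual ℂ H,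
      TensorProduct.lid ℂ _ (TensorProduct.map (contractRight ℂ H) LinearMap.id
        ((TensorProduct.assoc ℂ H _ _).symm (a ⊗ₜ t))) =
        dualDistrib ℂ H H t ∘ₗ TensorProduct.mk ℂ H H a := by
    intro t
    induction t using TensorProduct.induction_on with
    | zero => simp
    | tmul f g => ext x; simp [contractRight_apply]
    | add s t hs ht => simp only [tmul_add, map_add, hs, ht, LinearMap.add_comp]
  ext x
  simp [FH, hcontract, dualDistrib_dComul]

theorem FK_apply (h : H) (f : Module.Dual ℂ H) :
    FK h f = (Real.sqrt (Module.finrank ℂ H) : ℂ) •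
      TensorProduct.lid ℂ H (f.rTensor H (comul h)) := by
  simp only [FK, LinearMap.smul_apply, LinearMap.comp_apply, LinearEquiv.coe_coe,
    LinearMap.flip_apply, TensorProduct.mk_apply]
  congr 1
  induction comul (R := ℂ) h using TensorProduct.induction_on with
  | zero => simp
  | tmul u v => simp [contractLeft_apply]
  | add s t hs ht => simp only [tmul_add, map_add, hs, ht]

-- In Sweedler notation: `φ(a h₁) h₂ = φ(h) S(a)`.
theorem lid_rTensor_comp_mulLeft_comul {h : H} {φ : Module.Dual ℂ H}
    (hint : ∀ x : H, x * h = counit (R := ℂ) x • h)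
    (hφ : ∀ f : Module.Dual ℂ H, dmulT (φ ⊗ₜ f) = f 1 • φ)
    (hSS : ∀ x : H, antipode ℂ (antipode ℂ x) = x) (a : H) :
    TensorProduct.lid ℂ H ((φ ∘ₗ LinearMap.mulLeft ℂ a).rTensor H (comul h)) =
      φ h • antipode ℂ a := by
  have hswap : (a ⊗ₜ[ℂ] (1 : H)) * comul h = ((1 : H) ⊗ₜ antipode ℂ a) * comul h := by
    rw [one_tmul_mul_comul_of_mul_eq_counit_smul hint, hSS]
  have hmulLeft : (LinearMap.mulLeft ℂ a).rTensor H (comul h) = (a ⊗ₜ[ℂ] (1 : H)) * comul h := by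
    rw [← LinearMap.mulLeft_apply (R := ℂ), LinearMap.mulLeft_tmul, LinearMap.mulLeft_one]
    rfl
  rw [LinearMap.rTensor_comp_apply, hmulLeft, hswap, lid_rTensor_one_tmul_mul,
    lid_rTensor_comul_of_dmulT_eq φ hφ, mul_smul_comm, mul_one]

theorem fourier_fourier_eq_antipode_general
    [FiniteDimensional ℂ H]
    (h : H) (φ : Module.Dual ℂ H)
    -- h is the non-zero idempotent two-sided integral of H:
    (hne : h ≠ 0)
    (hint1 : ∀ x : H, x * h = Coalgebra.counit (R := ℂ) x • h)
    -- φ is the non-zero idempotent two-sided integral of H*: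
    (hφ2 : ∀ f : Module.Dual ℂ H, dmulT (φ ⊗ₜ f) = f 1 • φ)
    -- normalization: φ(h) = 1/dim H:
    (hnorm : φ h = (Module.finrank ℂ H : ℂ)⁻¹)
    -- Kac algebra axioms:
    (hSS : ∀ x : H, HopfAlgebra.antipode (R := ℂ) (HopfAlgebra.antipode (R := ℂ) x) = x) :
    FK h ∘ₗ FH φ = HopfAlgebra.antipode (R := ℂ) (A := H) := by
  have hdim : (Module.finrank ℂ H : ℂ) ≠ 0 := by
    have : Nontrivial H := nontrivial_of_ne h 0 hne
    exact_mod_cast Module.finrank_pos.ne'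
  have hδ : (Real.sqrt (Module.finrank ℂ H) : ℂ) * Real.sqrt (Module.finrank ℂ H) =
      Module.finrank ℂ H := by
    exact_mod_cast Real.mul_self_sqrt (Nat.cast_nonneg _)
  ext a
  rw [LinearMap.comp_apply, FH_apply, map_smul, FK_apply,
    lid_rTensor_comp_mulLeft_comul hint1 hφ2 hSS, hnorm, smul_smul, smul_smul, hδ,
    mul_inv_cancel₀ hdim, one_smul]

theorem fourier_fourier_eq_antipode
    [StarRing H] [StarModule ℂ H] [FiniteDimensional ℂ H]
    (h : H) (φ : Module.Dual ℂ H)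
    -- h is the non-zero idempotent two-sided integral of H:
    (hne : h ≠ 0)
    (hint1 : ∀ x : H, x * h = Coalgebra.counit (R := ℂ) x • h)
    (hint2 : ∀ x : H, h * x = Coalgebra.counit (R := ℂ) x • h)
    (hch : Coalgebra.counit (R := ℂ) h = 1)
    -- φ is the non-zero idempotent two-sided integral of H*:
    (hφne : φ ≠ 0)
    (hφ1 : ∀ f : Module.Dual ℂ H, dmulT (f ⊗ₜ φ) = f 1 • φ)
    (hφ2 : ∀ f : Module.Dual ℂ H, dmulT (φ ⊗ₜ f) = f 1 • φ)
    (hφone : φ 1 = 1)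
    -- normalization: φ(h) = 1/dim H:
    (hnorm : φ h = (Module.finrank ℂ H : ℂ)⁻¹)
    -- Kac algebra axioms:
    (hSS : ∀ x : H, HopfAlgebra.antipode (R := ℂ) (HopfAlgebra.antipode (R := ℂ) x) = x)
    (hSstar : ∀ x : H,
      HopfAlgebra.antipode (R := ℂ) (star (HopfAlgebra.antipode (R := ℂ) (star x))) = x) :
    FK h ∘ₗ FH φ = HopfAlgebra.antipode (R := ℂ) (A := H) :=
  fourier_fourier_eq_antipode_general h φ hne hint1 hφ2 hnorm hSS

end
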